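/- arXiv:2105.11247 — 2 statements merged into one kernel-verified Lean document; each statement's English description precedes it below -/
import Mathlib

section
/- Let F be a field of characteristic p > 0 and s an element of PGL(2,F). If s^r is not the identity and fixes a point ω of P^1(F), then s fixes ω. -/
open Matrix Polynomial
open scoped LinearAlgebra.Projectivization MatrixGroups Pointwise

namespace PaperPGL

section Defs

variable (F : Type*) [Field F]

lemma glInj (g : GL (Fin 2) F) :
    Function.Injective ((g : Matrix (Fin 2) (Fin 2) F).mulVecLin) := by
  intro x y h
  have h2 := congrArg ((↑g⁻¹ : Matrix (Fin 2) (Fin 2) F).mulVecLin) h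
  simp only [Matrix.mulVecLin_apply, Matrix.mulVec_mulVec] at h2
  rw [← Matrix.GeneralLinearGroup.coe_mul, inv_mul_cancel] at h2
  simpa using h2

noncomputable instance : MulAction (GL (Fin 2) F) (ℙ F (Fin 2 → F)) where
  smul g x := Projectivization.map ((g : Matrix (Fin 2) (Fin 2) F).mulVecLin) (glInj F g) x
  one_smul x := by
    show Projectivization.map _ _ x = x
    have h1 : ((1 : GL (Fin 2) F) : Matrix (Fin 2) (Fin 2) F).mulVecLin
        = (LinearMap.id : (Fin 2 → F) →ₗ[F] (Fin 2 → F)) := by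
      rw [Matrix.GeneralLinearGroup.coe_one, Matrix.mulVecLin_one]
    simp only [h1]
    rw [Projectivization.map_id]
    rfl
  mul_smul g h x := by
    show Projectivization.map _ _ x = Projectivization.map _ _ (Projectivization.map _ _ x)
    have h1 : ((g * h : GL (Fin 2) F) : Matrix (Fin 2) (Fin 2) F).mulVecLin
        = ((g : Matrix (Fin 2) (Fin 2) F).mulVecLin).comp
          ((h : Matrix (Fin 2) (Fin 2) F).mulVecLin) := by
      rw [← Matrix.mulVecLin_mul, ← Matrix.GeneralLinearGroup.coe_mul]
    simp only [h1]
    rw [Projectivization.map_comp]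
    rfl

/-- The image of `GL(2,F)` in the permutations of the projective line: `PGL(2,F)`
acting faithfully on `ℙ¹(F)`. -/
noncomputable def toPGL : GL (Fin 2) F →* Equiv.Perm (ℙ F (Fin 2 → F)) :=
  MulAction.toPermHom _ _

/-- `PGL(2,F)` as a subgroup of the permutation group of the projective line `ℙ¹(F)`. -/
noncomputable def pgl : Subgroup (Equiv.Perm (ℙ F (Fin 2 → F))) :=
  (toPGL F).range

/-- Entrywise base change `GL(2,F) →* GL(2,K)` along a ring hom. -/
noncomputable def baseChange (F K : Type*) [Field F] [Field K] (phi : F →+* K) :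
    GL (Fin 2) F →* GL (Fin 2) K :=
  Units.map phi.mapMatrix.toMonoidHom

end Defs

section Helpers
variable {F : Type*} [Field F]
variable {F : Type*} [Field F]

lemma mulVec_ne_zero (g : GL (Fin 2) F) {v : Fin 2 → F} (hv : v ≠ 0) :
    (g : Matrix (Fin 2) (Fin 2) F) *ᵥ v ≠ 0 := by
  intro h
  apply hv
  have : (g : Matrix (Fin 2) (Fin 2) F).mulVecLin v = (g : Matrix (Fin 2) (Fin 2) F).mulVecLin 0 := by
    simpa [Matrix.mulVecLin_apply] using h
  exact glInj F g this

lemma toPGL_mk (g : GL (Fin 2) F) (v : Fin 2 → F) (hv : v ≠ 0) :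
    toPGL F g (Projectivization.mk F v hv)
      = Projectivization.mk F ((g : Matrix (Fin 2) (Fin 2) F) *ᵥ v) (mulVec_ne_zero g hv) := by
  rw [toPGL, MulAction.toPermHom_apply, MulAction.toPerm_apply]
  show Projectivization.map ((g : Matrix (Fin 2) (Fin 2) F).mulVecLin) (glInj F g) _ = _
  rw [Projectivization.map_mk]
  rfl

lemma mk_congr {a b : Fin 2 → F} (h : a = b) (ha : a ≠ 0) :
    Projectivization.mk F a ha = Projectivization.mk F b (h ▸ ha) := by subst h; rfl

lemma coords_unique {v w : Fin 2 → F} (hli : LinearIndependent F ![v, w])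
    {x y x' y' : F} (h : x • v + y • w = x' • v + y' • w) : x = x' ∧ y = y' := by
  have h2 := (Fintype.linearIndependent_iff.mp hli) ![x - x', y - y'] ?_
  · constructor
    · have := h2 0; simpa [sub_eq_zero] using this
    · have := h2 1; simpa [sub_eq_zero] using this
  · rw [Fin.sum_univ_two]
    simp only [Matrix.cons_val_zero, Matrix.cons_val_one, Matrix.head_cons]
    rw [sub_smul, sub_smul, sub_add_sub_comm, sub_eq_zero]
    exact h

lemma scalar_of_basis {v w : Fin 2 → F} (hli : LinearIndependent F ![v, w])
    (N : Matrix (Fin 2) (Fin 2) F) (c : F)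
    (hv : N *ᵥ v = c • v) (hw : N *ᵥ w = c • w) : ∀ x, N *ᵥ x = c • x := by
  have hcard : Fintype.card (Fin 2) = Module.finrank F (Fin 2 → F) := by simp
  let B := basisOfLinearIndependentOfCardEqFinrank hli hcard
  have hB : ⇑B = ![v, w] := coe_basisOfLinearIndependentOfCardEqFinrank hli hcard
  have : N.mulVecLin = (c • LinearMap.id : (Fin 2 → F) →ₗ[F] (Fin 2 → F)) := by
    apply B.ext
    intro i
    fin_cases i <;> simp [hB, hv, hw]
  intro x
  have := LinearMap.congr_fun this x
  simpa using this

lemma toPGL_eq_one (g : GL (Fin 2) F) {c : F} (hc : c ≠ 0)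
    (h : ∀ x, (g : Matrix (Fin 2) (Fin 2) F) *ᵥ x = c • x) : toPGL F g = 1 := by
  ext x
  induction x using Projectivization.ind with
  | h x hx =>
    rw [toPGL_mk, Equiv.Perm.one_apply, mk_congr (h x)]
    rw [Projectivization.mk_eq_mk_iff]
    exact ⟨Units.mk0 c hc, rfl⟩

lemma exists_coords {v w : Fin 2 → F} (hli : LinearIndependent F ![v, w]) (u : Fin 2 → F) :
    ∃ s t : F, u = s • v + t • w := by
  have hcard : Fintype.card (Fin 2) = Module.finrank F (Fin 2 → F) := by simp
  let B := basisOfLinearIndependentOfCardEqFinrank hli hcard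
  have hB : ⇑B = ![v, w] := coe_basisOfLinearIndependentOfCardEqFinrank hli hcard
  refine ⟨B.repr u 0, B.repr u 1, ?_⟩
  have h := B.sum_repr u
  rw [Fin.sum_univ_two] at h
  simp only [hB, Matrix.cons_val_zero, Matrix.cons_val_one, Matrix.head_cons] at h
  exact h.symm


end Helpers

/-- If `s ∈ PGL(2,F)`, `char F = p > 0`, and `s^r` is not the identity but fixes a point `ω`
of `ℙ¹(F)`, then `s` fixes `ω`. -/
theorem stmt7 (F : Type*) [Field F] (p : ℕ) (hp : p.Prime) [CharP F p]
    (σ : Equiv.Perm (ℙ F (Fin 2 → F))) (hσ : σ ∈ pgl F) (r : ℕ) (hr : 0 < r)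
    (hne : σ ^ r ≠ 1) (ω : ℙ F (Fin 2 → F)) (hω : (σ ^ r) ω = ω) :
    σ ω = ω := by
  by_contra hfix
  obtain ⟨g, hg⟩ := hσ
  set M : Matrix (Fin 2) (Fin 2) F := (g : Matrix (Fin 2) (Fin 2) F) with hM
  have hMn : ∀ n : ℕ, (M ^ n : Matrix (Fin 2) (Fin 2) F)
      = ((g ^ n : GL (Fin 2) F) : Matrix (Fin 2) (Fin 2) F) :=
    fun n => (Units.val_pow_eq_pow_val g n).symm
  have hnz : ∀ (n : ℕ) (x : Fin 2 → F), x ≠ 0 → (M ^ n) *ᵥ x ≠ 0 := by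
    intro n x hx
    rw [hMn n]
    exact mulVec_ne_zero _ hx
  have key : ∀ (n : ℕ) (x : Fin 2 → F) (hx : x ≠ 0),
      (σ ^ n) (Projectivization.mk F x hx)
        = Projectivization.mk F ((M ^ n) *ᵥ x) (hnz n x hx) := by
    intro n x hx
    rw [← hg, ← map_pow, toPGL_mk]
    exact mk_congr (congrArg (· *ᵥ x) (hMn n).symm) _
  have key1 : ∀ (x : Fin 2 → F) (hx : x ≠ 0),
      σ (Projectivization.mk F x hx) = Projectivization.mk F (M *ᵥ x) (mulVec_ne_zero g hx) := by
    intro x hx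
    rw [← hg, toPGL_mk]
  obtain ⟨v, hv0, hvω⟩ : ∃ (v : Fin 2 → F) (hv : v ≠ 0), ω = Projectivization.mk F v hv :=
    ⟨ω.rep, ω.rep_nonzero, ω.mk_rep.symm⟩
  set w : Fin 2 → F := M *ᵥ v with hwdef
  have hw0 : w ≠ 0 := mulVec_ne_zero g hv0
  have hσω : σ ω = Projectivization.mk F w hw0 := by rw [hvω, key1]
  -- eigen equation for v
  have hωv : (σ ^ r) (Projectivization.mk F v hv0) = Projectivization.mk F v hv0 := by
    rw [← hvω]; exact hω
  rw [key r v hv0] at hωv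
  obtain ⟨a, ha⟩ := (Projectivization.mk_eq_mk_iff F _ _ _ _).mp hωv
  have hav : (M ^ r) *ᵥ v = (a : F) • v := by rw [← ha, Units.smul_def]
  -- eigen equation for w
  have hcomm : (σ ^ r) (σ ω) = σ ω := by
    rw [← Equiv.Perm.mul_apply, ((Commute.refl σ).pow_left r).eq, Equiv.Perm.mul_apply, hω]
  have hfw : (σ ^ r) (Projectivization.mk F w hw0) = Projectivization.mk F w hw0 := by
    rw [← hσω]; exact hcomm
  rw [key r w hw0] at hfw
  obtain ⟨b, hb⟩ := (Projectivization.mk_eq_mk_iff F _ _ _ _).mp hfw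
  have hbw : (M ^ r) *ᵥ w = (b : F) • w := by rw [← hb, Units.smul_def]
  -- linear independence of v, w
  have hli : LinearIndependent F ![v, w] := by
    rw [linearIndependent_fin2]
    constructor
    · simpa using hw0
    · intro x hx
      simp only [Matrix.cons_val_one, Matrix.head_cons, Matrix.cons_val_zero] at hx
      apply hfix
      rw [hσω, hvω]
      exact ((Projectivization.mk_eq_mk_iff' F v w hv0 hw0).mpr ⟨x, hx⟩).symm
  by_cases hab : (a : F) = (b : F)
  · -- σ ^ r would be the identity
    apply hne
    have hs := scalar_of_basis hli (M ^ r) (a : F) hav (by rw [hbw, hab])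
    have h1 : toPGL F (g ^ r) = 1 := by
      apply toPGL_eq_one _ a.ne_zero
      intro x
      rw [← hMn r]
      exact hs x
    rw [← hg, ← map_pow]
    exact h1
  · set u : Fin 2 → F := M *ᵥ w with hudef
    have hu0 : u ≠ 0 := mulVec_ne_zero g hw0
    have hσσω : σ (σ ω) = Projectivization.mk F u hu0 := by rw [hσω, key1]
    have h1 : σ ^ r * (σ * σ) = σ * (σ * σ ^ r) := by group
    have hc2 : (σ ^ r) (σ (σ ω)) = σ (σ ((σ ^ r) ω)) := by
      simp only [← Equiv.Perm.mul_apply, ← mul_assoc]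
      simp only [← mul_assoc] at h1
      rw [h1]
    have hfu : (σ ^ r) (Projectivization.mk F u hu0) = Projectivization.mk F u hu0 := by
      rw [← hσσω, hc2, hω]
    rw [key r u hu0] at hfu
    obtain ⟨c, hc⟩ := (Projectivization.mk_eq_mk_iff F _ _ _ _).mp hfu
    have hcu : (M ^ r) *ᵥ u = (c : F) • u := by rw [← hc, Units.smul_def]
    obtain ⟨s, t, hst⟩ := exists_coords hli u
    have hMru : (M ^ r) *ᵥ u = (s * (a : F)) • v + (t * (b : F)) • w := by
      rw [hst, Matrix.mulVec_add, Matrix.mulVec_smul, Matrix.mulVec_smul, hav, hbw,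
        smul_smul, smul_smul]
    have hcu' : (M ^ r) *ᵥ u = ((c : F) * s) • v + ((c : F) * t) • w := by
      rw [hcu, hst, smul_add, smul_smul, smul_smul]
    have heq := coords_unique hli (hcu'.symm.trans hMru)
    by_cases hs : s = 0
    · -- u proportional to w : σ fixes σ ω, contradiction
      have hmk : Projectivization.mk F u hu0 = Projectivization.mk F w hw0 :=
        (Projectivization.mk_eq_mk_iff' F u w hu0 hw0).mpr ⟨t, by rw [hst, hs, zero_smul, zero_add]⟩
      have h2 : σ (σ ω) = σ ω := by rw [hσσω, hmk, ← hσω]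
      exact hfix (σ.injective h2)
    · by_cases ht : t = 0
      · -- σ ^ 2 = 1
        have hus : u = s • v := by rw [hst, ht, zero_smul, add_zero]
        have hM2v : (M * M) *ᵥ v = s • v := by
          rw [← Matrix.mulVec_mulVec, ← hwdef, ← hudef, hus]
        have hM2w : (M * M) *ᵥ w = s • w := by
          rw [← Matrix.mulVec_mulVec, ← hudef, hus, Matrix.mulVec_smul, ← hwdef]
        have hs2 := scalar_of_basis hli (M * M) s hM2v hM2w
        have hσσ : σ * σ = 1 := by
          rw [← hg, ← _root_.map_mul]
          apply toPGL_eq_one _ hs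
          intro x
          rw [← hs2 x, Units.val_mul]
        rcases Nat.even_or_odd r with ⟨k, hk⟩ | ⟨k, hk⟩
        · apply hne
          rw [hk, ← two_mul, pow_mul, pow_two, hσσ, one_pow]
        · have hσr : σ ^ r = σ := by
            rw [hk, pow_succ, pow_mul, pow_two, hσσ, one_pow, one_mul]
          exact hfix (by rw [← hσr]; exact hω)
      · -- s, t both nonzero : a = b, contradiction
        apply hab
        have h1 : (a : F) = (c : F) := by
          have := heq.1
          rw [mul_comm s (a : F)] at this
          exact (mul_right_cancel₀ hs this).symm
        have h2 : (c : F) = (b : F) := by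
          have := heq.2
          rw [mul_comm t (b : F)] at this
          exact mul_right_cancel₀ ht this
        rw [h1, h2]


end PaperPGL
end

section
/- Let G be a subgroup of PGL(2,q), Φ a generator of F_q(x)^G, α ∈ \bar{F}_q \ F_q with Φ(α) ∈ F_q, and let s ∈ G satisfy s(α) = α^q. Then the order of s in G equals the degree [F_q(α) : F_q] of the minimal polynomial of α over F_q. -/
/-!
Let `A` be the matrix `m` of `s` viewed over `K`, and `v x = ![x, 1]`; the hypothesis says
`A *ᵥ v α = λ • v (α ^ q)`. Since `A` has entries in `F_q`, Frobenius iterates of this give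
`A ^ j *ᵥ v α = μ • v (α ^ q ^ j)` with `μ ≠ 0`. Hence if `s ^ j = 1`, i.e. `A ^ j` is scalar,
then `α ^ q ^ j = α`. Conversely, if `α ^ q ^ j = α`, then `v α` and `A *ᵥ v α ∝ v (α ^ q)` are
eigenvectors of `A ^ j` for the same eigenvalue `μ`, independent because `α ^ q ≠ α`, so `A ^ j`
is scalar. Finally `α ^ q ^ j = α` iff `[F_q(α) : F_q] ∣ j`, since the Frobenius of `F_q(α)` has
order `[F_q(α) : F_q]`.
-/

open Matrix Polynomial
open scoped LinearAlgebra.Projectivization MatrixGroups Pointwise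

open IntermediateField in
theorem FiniteField.pow_card_pow_eq_self_iff {Fq K : Type*} [Field Fq] [Fintype Fq] [Field K]
    [Algebra Fq K] {α : K} (hα : IsIntegral Fq α) (j : ℕ) :
    α ^ Fintype.card Fq ^ j = α ↔ (minpoly Fq α).natDegree ∣ j := by
  have : FiniteDimensional Fq Fq⟮α⟯ := adjoin.finiteDimensional hα
  have : Finite Fq⟮α⟯ := Module.finite_of_finite Fq
  rw [← adjoin.finrank hα, ← orderOf_frobeniusAlgHom, orderOf_dvd_iff_pow_eq_one]
  constructor
  · intro h
    refine adjoin_algHom_ext Fq fun x hx => ?_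
    rw [Set.mem_singleton_iff] at hx
    subst hx
    ext
    simp [AlgHom.coe_pow, coe_frobeniusAlgHom, pow_iterate, h]
  · intro h
    have := congrArg Subtype.val (DFunLike.congr_fun h (AdjoinSimple.gen Fq α))
    simpa [AlgHom.coe_pow, coe_frobeniusAlgHom, pow_iterate] using this

theorem Matrix.eq_smul_one_of_mulVec_eq_smul {K : Type*} [Field K] {M : Matrix (Fin 2) (Fin 2) K}
    {x y μ : K} (hxy : x ≠ y) (hx : M *ᵥ ![x, 1] = μ • ![x, 1])
    (hy : M *ᵥ ![y, 1] = μ • ![y, 1]) : M = μ • 1 := by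
  have hx0 := congrFun hx 0
  have hx1 := congrFun hx 1
  have hy0 := congrFun hy 0
  have hy1 := congrFun hy 1
  simp only [mulVec, vec2_dotProduct, cons_val_zero, cons_val_one, mul_one, Pi.smul_apply,
    smul_eq_mul] at hx0 hx1 hy0 hy1
  have hsub : x - y ≠ 0 := sub_ne_zero.mpr hxy
  have h00 : M 0 0 = μ := mul_right_cancel₀ hsub (by linear_combination hx0 - hy0)
  have h10 : M 1 0 = 0 :=
    (mul_eq_zero.mp (by linear_combination hx1 - hy1 : M 1 0 * (x - y) = 0)).resolve_right hsub
  ext i j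
  fin_cases i <;> fin_cases j <;> simp
  · exact h00
  · linear_combination hx0 - x * h00
  · exact h10
  · linear_combination hx1 - x * h10

theorem Matrix.exists_map_eq_smul_one_iff {R S : Type*} [CommRing R] [CommRing S] {f : R →+* S}
    (hf : Function.Injective f) {n : Type*} [Fintype n] [DecidableEq n] [Nonempty n]
    (M : Matrix n n R) : (∃ c : S, M.map f = c • 1) ↔ ∃ c : R, M = c • 1 := by
  constructor
  · rintro ⟨c, hc⟩
    obtain ⟨i⟩ := ‹Nonempty n›
    have hci : f (M i i) = c := by simpa using congrFun (congrFun hc i) i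
    refine ⟨M i i, map_injective hf ?_⟩
    ext j k
    simpa [one_apply, apply_ite f, hci] using congrFun (congrFun hc j) k
  · rintro ⟨c, rfl⟩
    exact ⟨f c, by ext i j; simp [one_apply, apply_ite f]⟩

theorem AlgHom.comp_mulVec_map {F K L : Type*} [CommRing F] [CommRing K] [CommRing L]
    [Algebra F K] [Algebra F L] {m n : Type*} [Fintype n] (τ : K →ₐ[F] L) (M : Matrix m n F)
    (v : n → K) : τ ∘ (M.map (algebraMap F K) *ᵥ v) = M.map (algebraMap F L) *ᵥ (τ ∘ v) := by
  ext i
  simp [mulVec, dotProduct, map_sum]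

section FrobeniusOrbit

variable {Fq K : Type*} [Field Fq] [Fintype Fq] [Field K] [Algebra Fq K]

local notation "q" => Fintype.card Fq

theorem mulVec_pow_card_pow_eq_smul (M : Matrix (Fin 2) (Fin 2) Fq) {x l : K}
    (h : (algebraMap Fq K).mapMatrix M *ᵥ ![x, 1] = l • ![x ^ q, 1]) (j : ℕ) :
    (algebraMap Fq K).mapMatrix M *ᵥ ![x ^ q ^ j, 1] = l ^ q ^ j • ![x ^ q ^ (j + 1), 1] := by
  have := congrArg (⇑(FiniteField.frobeniusAlgHom Fq K ^ j) ∘ ·) h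
  rw [RingHom.mapMatrix_apply, AlgHom.comp_mulVec_map, AlgHom.coe_pow,
    FiniteField.coe_frobeniusAlgHom, pow_iterate] at this
  convert this using 1 <;> ext i <;> fin_cases i <;> simp [← pow_mul, pow_succ, mul_pow, mul_comm]

theorem exists_pow_mulVec_eq_smul (M : Matrix (Fin 2) (Fin 2) Fq) {x l : K}
    (h : (algebraMap Fq K).mapMatrix M *ᵥ ![x, 1] = l • ![x ^ q, 1]) (hl : l ≠ 0) (j : ℕ) :
    ∃ μ : K, μ ≠ 0 ∧ (algebraMap Fq K).mapMatrix M ^ j *ᵥ ![x, 1] = μ • ![x ^ q ^ j, 1] := by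
  induction j with
  | zero => exact ⟨1, one_ne_zero, by simp⟩
  | succ j ih =>
    obtain ⟨μ, hμ, hj⟩ := ih
    refine ⟨μ * l ^ q ^ j, mul_ne_zero hμ (pow_ne_zero _ hl), ?_⟩
    rw [pow_succ', ← mulVec_mulVec, hj, mulVec_smul, mulVec_pow_card_pow_eq_smul M h, smul_smul]

theorem exists_mapMatrix_pow_eq_smul_one_iff {M : Matrix (Fin 2) (Fin 2) Fq} (hM : IsUnit M)
    {x l : K} (hx : x ^ q ≠ x) (h : (algebraMap Fq K).mapMatrix M *ᵥ ![x, 1] = l • ![x ^ q, 1])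
    (j : ℕ) : (∃ c : K, (algebraMap Fq K).mapMatrix (M ^ j) = c • 1) ↔ x ^ q ^ j = x := by
  set A := (algebraMap Fq K).mapMatrix M
  have hl : l ≠ 0 := by
    rintro rfl
    have := mulVec_injective_iff_isUnit.2 (hM.map (algebraMap Fq K).mapMatrix)
      (h.trans (zero_smul K _) |>.trans (mulVec_zero A).symm)
    simpa using congrFun this 1
  obtain ⟨μ, hμ, hj⟩ := exists_pow_mulVec_eq_smul M h hl j
  rw [map_pow]
  constructor
  · rintro ⟨c, hc⟩
    rw [hc, smul_mulVec, one_mulVec] at hj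
    have h0 := congrFun hj 0
    have h1 := congrFun hj 1
    simp only [Pi.smul_apply, smul_eq_mul, cons_val_zero, cons_val_one, mul_one] at h0 h1
    rw [h1] at h0
    exact (mul_left_cancel₀ hμ h0).symm
  · intro hxj
    rw [hxj] at hj
    -- `A ^ j` commutes with `A`, so `A *ᵥ ![x, 1] = l • ![x ^ q, 1]` is again a `μ`-eigenvector.
    have hconj : A ^ j *ᵥ ![x ^ q, 1] = μ • ![x ^ q, 1] := by
      refine smul_right_injective _ hl ?_
      dsimp only
      rw [← mulVec_smul, ← h, mulVec_mulVec, ← pow_succ, pow_succ', ← mulVec_mulVec, hj,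
        mulVec_smul, h, smul_comm]
    exact ⟨μ, eq_smul_one_of_mulVec_eq_smul hx.symm hj hconj⟩

end FrobeniusOrbit

namespace PaperPGL

section ProjectiveLine

variable {F : Type*} [Field F]

theorem toPGL_apply_mk (g : GL (Fin 2) F) (v : Fin 2 → F) (hv : v ≠ 0) :
    toPGL F g (Projectivization.mk F v hv) =
      Projectivization.mk F ((g : Matrix (Fin 2) (Fin 2) F) *ᵥ v)
        (fun h => hv (glInj F g (by simpa using h))) :=
  Projectivization.map_mk _ (glInj F g) _ _

theorem toPGL_eq_one_iff (g : GL (Fin 2) F) :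
    toPGL F g = 1 ↔ ∃ c : F, (g : Matrix (Fin 2) (Fin 2) F) = c • 1 := by
  constructor
  · intro hg
    obtain ⟨c, hc⟩ := LinearMap.exists_eq_smul_id_of_forall_notLinearIndependent
      (f := (g : Matrix (Fin 2) (Fin 2) F).mulVecLin) fun v => by
        by_cases hv : v = 0
        · simp [hv, linearIndependent_fin2]
        · have := DFunLike.congr_fun hg (Projectivization.mk F v hv)
          rw [toPGL_apply_mk, Equiv.Perm.one_apply, Projectivization.mk_eq_mk_iff'] at this
          obtain ⟨a, ha⟩ := this
          simp [LinearIndependent.pair_iff' hv, ← ha]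
    refine ⟨c, ?_⟩
    simpa [← Matrix.toLin'_apply'] using congrArg LinearMap.toMatrix' hc
  · rintro ⟨c, hc⟩
    ext x : 1
    induction x using Projectivization.ind with | h v hv =>
    rw [toPGL_apply_mk, Equiv.Perm.one_apply, Projectivization.mk_eq_mk_iff']
    exact ⟨c, by rw [hc, Matrix.smul_mulVec, Matrix.one_mulVec]⟩

end ProjectiveLine

theorem stmt14_general (Fq : Type*) [Field Fq] [Fintype Fq] (q : ℕ) (hq : Fintype.card Fq = q)
    (K : Type*) [Field K] [Algebra Fq K] [IsAlgClosure Fq K]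
    (α : K) (hα : ∀ x : Fq, algebraMap Fq K x ≠ α)
    (m : GL (Fin 2) Fq)
    (heq : algebraMap Fq K (m.val 1 0) * α ^ (q + 1) + algebraMap Fq K (m.val 1 1) * α ^ q
      - algebraMap Fq K (m.val 0 0) * α - algebraMap Fq K (m.val 0 1) = 0) :
    orderOf (toPGL Fq m) = (minpoly Fq α).natDegree := by
  subst hq
  have hαint : IsIntegral Fq α := Algebra.IsIntegral.isIntegral α
  have hαq : α ^ Fintype.card Fq ≠ α := fun h => by
    have := (FiniteField.pow_card_pow_eq_self_iff hαint 1).1 (by rwa [pow_one])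
    obtain ⟨x, hx⟩ := minpoly.natDegree_eq_one_iff.1 (Nat.dvd_one.1 this)
    exact hα x hx
  have hstep : (algebraMap Fq K).mapMatrix (m : Matrix (Fin 2) (Fin 2) Fq) *ᵥ ![α, 1] =
      (algebraMap Fq K (m.val 1 0) * α + algebraMap Fq K (m.val 1 1)) •
        ![α ^ Fintype.card Fq, 1] := by
    ext i
    fin_cases i <;> simp only [mulVec, vec2_dotProduct, RingHom.mapMatrix_apply, map_apply,
      cons_val_zero, cons_val_one, mul_one, Pi.smul_apply, smul_eq_mul, Fin.zero_eta, Fin.mk_one]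
    linear_combination -heq
  refine Nat.dvd_right_iff_eq.mp fun j => ?_
  rw [orderOf_dvd_iff_pow_eq_one, ← map_pow, toPGL_eq_one_iff, Units.val_pow_eq_pow_val,
    ← exists_map_eq_smul_one_iff (algebraMap Fq K).injective, ← RingHom.mapMatrix_apply,
    exists_mapMatrix_pow_eq_smul_one_iff m.isUnit hαq hstep,
    FiniteField.pow_card_pow_eq_self_iff hαint]

/-- With `Φ = f/g` a generator of the `G`-invariant rational functions, `α ∉ F_q`,
`Φ(α) ∈ F_q`, and `s ∈ G` with `s(α) = α^q`, the order of `s` equals the degree of the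
minimal polynomial of `α` over `F_q`. -/
theorem stmt14 (Fq : Type*) [Field Fq] [Fintype Fq] (q : ℕ) (hq : Fintype.card Fq = q)
    (K : Type*) [Field K] [Algebra Fq K] [IsAlgClosure Fq K]
    (G : Subgroup (Equiv.Perm (ℙ Fq (Fin 2 → Fq)))) (hG : G ≤ pgl Fq)
    (f g : Polynomial Fq) (hcop : IsCoprime f g)
    (hdeg : max f.natDegree g.natDegree = Nat.card G)
    (hinv : ∀ m : GL (Fin 2) Fq, toPGL Fq m ∈ G → ∀ z : K,
      algebraMap Fq K (m.val 1 0) * z + algebraMap Fq K (m.val 1 1) ≠ 0 →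
      aeval z g ≠ 0 →
      aeval ((algebraMap Fq K (m.val 0 0) * z + algebraMap Fq K (m.val 0 1)) /
          (algebraMap Fq K (m.val 1 0) * z + algebraMap Fq K (m.val 1 1))) g ≠ 0 →
      aeval ((algebraMap Fq K (m.val 0 0) * z + algebraMap Fq K (m.val 0 1)) /
          (algebraMap Fq K (m.val 1 0) * z + algebraMap Fq K (m.val 1 1))) f * aeval z g =
        aeval z f *
          aeval ((algebraMap Fq K (m.val 0 0) * z + algebraMap Fq K (m.val 0 1)) /
            (algebraMap Fq K (m.val 1 0) * z + algebraMap Fq K (m.val 1 1))) g)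
    (α : K) (hα : ∀ x : Fq, algebraMap Fq K x ≠ α)
    (hgα : aeval α g ≠ 0) (y : Fq) (hy : aeval α f = algebraMap Fq K y * aeval α g)
    (m : GL (Fin 2) Fq) (hm : toPGL Fq m ∈ G)
    (heq : algebraMap Fq K (m.val 1 0) * α ^ (q + 1) + algebraMap Fq K (m.val 1 1) * α ^ q
      - algebraMap Fq K (m.val 0 0) * α - algebraMap Fq K (m.val 0 1) = 0) :
    orderOf (toPGL Fq m) = (minpoly Fq α).natDegree :=
  stmt14_general Fq q hq K α hα m heq

end PaperPGL
end
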